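/- Let n ≥ 2 be an integer, ω₀ > 1, δ ∈ (0,1), and v̄ > (2/δ)·ln(n−1+ω₀). Then J̃'(v) < δ/2 for every v ∈ [v̄/2, v̄]. -/

import Mathlib

/-!
Put `x = v / v̄` and `k = n - 2`. Then `J̃` is the Bernstein polynomial of degree `k + 1` of the
sequence `a m = ln (m + ω₀)`, so `v̄ J̃'(v) = (k + 1) B_k(Δa)(x)`. Because `ω₀ ≥ 1`, the increments
`Δa m` are at most `g m = ln (m + 2) - ln (m + 1)`, and `B_k(g)` is decreasing on `[0, 1]` since `g`
is. So for `x ≥ 1/2` everything reduces to `(k + 1) B_k(g)(1/2) ≤ ln (k + 2) < ln (n - 1 + ω₀)`.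
The bound `g m ≤ 1 / (m + 1)` gives `(k + 1) B_k(g)(1/2) ≤ 2`, which suffices once `k ≥ 6`; the
cases `k ≤ 5` are checked numerically (for `k = 0, 1` the inequality is an equality).
-/

open Real Finset

/-- The expected social-network benefit at threshold `v` under uniform valuations. -/
noncomputable def Jt (n : ℕ) (ω₀ vbar : ℝ) (v : ℝ) : ℝ :=
  ∑ m ∈ Finset.range n, (Nat.choose (n - 1) m : ℝ) * Real.log ((m : ℝ) + ω₀) *
    (v / vbar) ^ m * (1 - v / vbar) ^ (n - 1 - m)

open Polynomial

noncomputable def bernsteinSum {R : Type*} [CommRing R] (k : ℕ) (a : ℕ → R) : R[X] :=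
  ∑ m ∈ range (k + 1), C (a m) * bernsteinPolynomial R k m

theorem derivative_bernsteinSum {R : Type*} [CommRing R] (k : ℕ) (a : ℕ → R) :
    derivative (bernsteinSum (k + 1) a) =
      (k + 1 : R[X]) * bernsteinSum k (fun m => a (m + 1) - a m) := by
  simp only [bernsteinSum, derivative_sum, derivative_mul, derivative_C, zero_mul, zero_add]
  rw [sum_range_succ']
  -- summation by parts; the boundary term vanishes as `bernsteinPolynomial R k (k + 1) = 0`
  simp only [bernsteinPolynomial.derivative_succ_aux, bernsteinPolynomial.derivative_zero,
    Nat.add_sub_cancel, mul_sum, C_sub, sub_mul, mul_sub, sum_sub_distrib]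
  rw [sum_range_succ' (fun m => (k + 1 : R[X]) * (C (a m) * bernsteinPolynomial R k m)),
    sum_range_succ (fun m => C (a (m + 1)) * ((k + 1 : R[X]) * bernsteinPolynomial R k (m + 1))),
    bernsteinPolynomial.eq_zero_of_lt R (Nat.lt_succ_self k)]
  push_cast
  simp only [mul_left_comm (C _) ((k : R[X]) + 1)]
  rw [mul_zero, mul_zero, add_zero]
  ring

theorem bernsteinPolynomial_eval_nonneg (n ν : ℕ) {x : ℝ} (hx : x ∈ Set.Icc 0 1) :
    0 ≤ (bernsteinPolynomial ℝ n ν).eval x :=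
  bernstein_nonneg (x := ⟨x, hx⟩)

theorem bernsteinSum_eval_le_eval (k : ℕ) {a b : ℕ → ℝ} (hab : ∀ m, a m ≤ b m) {x : ℝ}
    (hx : x ∈ Set.Icc 0 1) : (bernsteinSum k a).eval x ≤ (bernsteinSum k b).eval x := by
  simp only [bernsteinSum, eval_finsetSum, eval_mul, eval_C]
  gcongr with m
  · exact bernsteinPolynomial_eval_nonneg k m hx
  · exact hab m

theorem antitoneOn_bernsteinSum_eval (k : ℕ) {a : ℕ → ℝ} (ha : Antitone a) :
    AntitoneOn (fun x => (bernsteinSum k a).eval x) (Set.Icc 0 1) := by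
  refine antitoneOn_of_deriv_nonpos (convex_Icc 0 1) (Polynomial.continuousOn _)
    (Polynomial.differentiableOn _) fun x hx => ?_
  rw [Polynomial.deriv]
  rcases k with _ | k
  · simp [bernsteinSum, bernsteinPolynomial]
  · have hdiff : (bernsteinSum k fun m => a (m + 1) - a m).eval x ≤ (bernsteinSum k 0).eval x :=
      bernsteinSum_eval_le_eval k (fun m => sub_nonpos.mpr (ha m.le_succ)) (interior_subset hx)
    rw [show bernsteinSum k (0 : ℕ → ℝ) = 0 by simp [bernsteinSum], eval_zero] at hdiff
    rw [derivative_bernsteinSum, eval_mul]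
    exact mul_nonpos_of_nonneg_of_nonpos (by simp; positivity) hdiff

theorem bernsteinSum_eval_half (k : ℕ) (a : ℕ → ℝ) :
    (bernsteinSum k a).eval (1 / 2) = (∑ m ∈ range (k + 1), (k.choose m : ℝ) * a m) / 2 ^ k := by
  simp only [bernsteinSum, eval_finsetSum, eval_mul, eval_C, bernsteinPolynomial, eval_pow,
    eval_natCast, eval_X, eval_sub, eval_one, sum_div]
  refine sum_congr rfl fun m hm => ?_
  have hmk : m + (k - m) = k := by have := mem_range.mp hm; omega
  rw [show (1 : ℝ) - 1 / 2 = 1 / 2 by norm_num, mul_assoc _ ((1 / 2 : ℝ) ^ m), ← pow_add, hmk,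
    one_div_pow]
  field_simp

theorem log_add_one_sub_log_antitoneOn :
    AntitoneOn (fun t : ℝ => log (t + 1) - log t) (Set.Ioi 0) := by
  intro s (hs : 0 < s) t (ht : 0 < t) hst
  have hlog (u : ℝ) (hu : 0 < u) : log (u + 1) - log u = log (1 + u⁻¹) := by
    rw [← log_div (by positivity) hu.ne', add_div, div_self hu.ne', one_div]
  simp only [hlog s hs, hlog t ht]
  gcongr

theorem log_add_one_sub_log_le_inv {t : ℝ} (ht : 0 < t) : log (t + 1) - log t ≤ t⁻¹ := by
  rw [← log_div (by positivity) ht.ne']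
  calc log ((t + 1) / t) ≤ (t + 1) / t - 1 := log_le_sub_one_of_pos (by positivity)
    _ = t⁻¹ := by field_simp; ring

noncomputable def logIncrement (m : ℕ) : ℝ := log (m + 2) - log (m + 1)

theorem logIncrement_eq (m : ℕ) :
    logIncrement m = log (((m : ℝ) + 1) + 1) - log ((m : ℝ) + 1) := by
  rw [logIncrement, add_assoc, one_add_one_eq_two]

theorem antitone_logIncrement : Antitone logIncrement := by
  refine antitone_nat_of_succ_le fun m => ?_
  rw [logIncrement_eq, logIncrement_eq]
  exact log_add_one_sub_log_antitoneOn (by positivity : (0 : ℝ) < m + 1)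
    (by positivity : (0 : ℝ) < (m + 1 : ℕ) + 1) (by push_cast; linarith)

theorem logIncrement_le_inv (m : ℕ) : logIncrement m ≤ ((m : ℝ) + 1)⁻¹ := by
  rw [logIncrement_eq]
  exact log_add_one_sub_log_le_inv (by positivity)

theorem succ_mul_bernsteinSum_logIncrement_eval_half_le_two (k : ℕ) :
    (k + 1) * (bernsteinSum k logIncrement).eval (1 / 2) ≤ 2 := by
  have hterm (m : ℕ) : ((k : ℝ) + 1) * ((k.choose m : ℝ) * logIncrement m) ≤
      ((k + 1).choose (m + 1) : ℝ) := by
    have hchoose : ((k : ℝ) + 1) * k.choose m = (k + 1).choose (m + 1) * ((m : ℝ) + 1) := by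
      exact_mod_cast Nat.add_one_mul_choose_eq k m
    calc ((k : ℝ) + 1) * ((k.choose m : ℝ) * logIncrement m)
        ≤ ((k : ℝ) + 1) * ((k.choose m : ℝ) * ((m : ℝ) + 1)⁻¹) := by
          gcongr; exact logIncrement_le_inv m
      _ = ((k + 1).choose (m + 1) : ℝ) := by
          rw [← mul_assoc, hchoose]; field_simp
  have hsum : ∑ m ∈ range (k + 1), (k + 1).choose (m + 1) ≤ 2 ^ (k + 1) := by
    rw [← Nat.sum_range_choose (k + 1), sum_range_succ' _ (k + 1)]
    exact Nat.le_add_right _ _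
  rw [bernsteinSum_eval_half, mul_div_assoc', div_le_iff₀ (by positivity), mul_sum]
  calc ∑ m ∈ range (k + 1), ((k : ℝ) + 1) * ((k.choose m : ℝ) * logIncrement m)
      ≤ ∑ m ∈ range (k + 1), ((k + 1).choose (m + 1) : ℝ) := sum_le_sum fun m _ => hterm m
    _ ≤ 2 ^ (k + 1) := by exact_mod_cast hsum
    _ = 2 * 2 ^ k := pow_succ' 2 k

theorem two_le_log_of_eight_le {x : ℝ} (hx : 8 ≤ x) : 2 ≤ log x := by
  rw [le_log_iff_exp_le (by linarith), show (2 : ℝ) = 1 + 1 by norm_num, exp_add]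
  nlinarith [exp_one_lt_d9, exp_pos 1]

theorem succ_mul_bernsteinSum_logIncrement_eval_half_le_log_of_le_five {k : ℕ} (hk : k ≤ 5) :
    (k + 1) * (bernsteinSum k logIncrement).eval (1 / 2) ≤ log (k + 2) := by
  rw [bernsteinSum_eval_half]
  have h4 : log 4 = 2 * log 2 := by
    rw [show (4 : ℝ) = 2 ^ 2 by norm_num, log_pow]; norm_num
  have h6 : log 6 = log 2 + log 3 := by
    rw [show (6 : ℝ) = 2 * 3 by norm_num, log_mul (by norm_num) (by norm_num)]
  -- each case is a linear inequality between `log 2, log 3, log 5, log 7` implied by these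
  have h32 : 3 * log 3 ≤ 5 * log 2 := by
    have := log_le_log (by norm_num) (show (3 : ℝ) ^ 3 ≤ 2 ^ 5 by norm_num)
    simpa [log_pow] using this
  have h25 : 2 * log 2 ≤ log 5 := by
    have := log_le_log (by norm_num) (show (2 : ℝ) ^ 2 ≤ 5 by norm_num)
    simpa [log_pow] using this
  have h523 : 5 * log 5 ≤ 2 * log 2 + 7 * log 3 := by
    have := log_le_log (by norm_num) (show (5 : ℝ) ^ 5 ≤ 2 ^ 2 * 3 ^ 7 by norm_num)
    simpa [log_pow, log_mul] using this
  have h537 : 15 * log 5 ≤ 3 * log 3 + 13 * log 7 := by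
    have := log_le_log (by norm_num) (show (5 : ℝ) ^ 15 ≤ 3 ^ 3 * 7 ^ 13 by norm_num)
    simpa [log_pow, log_mul] using this
  interval_cases k <;> norm_num [sum_range_succ, logIncrement, Nat.choose, h4, h6] <;> linarith

theorem succ_mul_bernsteinSum_logIncrement_eval_half_le_log (k : ℕ) :
    (k + 1) * (bernsteinSum k logIncrement).eval (1 / 2) ≤ log (k + 2) := by
  rcases le_or_gt k 5 with hk | hk
  · exact succ_mul_bernsteinSum_logIncrement_eval_half_le_log_of_le_five hk
  · refine (succ_mul_bernsteinSum_logIncrement_eval_half_le_two k).trans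
      (two_le_log_of_eight_le ?_)
    have : (6 : ℝ) ≤ k := by exact_mod_cast hk
    linarith

theorem log_add_sub_log_le_logIncrement (m : ℕ) {ω : ℝ} (hω : 1 ≤ ω) :
    log ((m + 1 : ℕ) + ω) - log (m + ω) ≤ logIncrement m := by
  rw [logIncrement_eq, Nat.cast_succ, add_right_comm]
  exact log_add_one_sub_log_antitoneOn (by positivity : (0 : ℝ) < m + 1)
    (by positivity : (0 : ℝ) < m + ω) (by linarith)

theorem Jt_succ_eq_eval (k : ℕ) (ω₀ vbar v : ℝ) :
    Jt (k + 1) ω₀ vbar v = (bernsteinSum k fun m => log (m + ω₀)).eval (v / vbar) := by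
  simp only [Jt, bernsteinSum, bernsteinPolynomial, eval_finsetSum, eval_mul, eval_C, eval_pow,
    eval_natCast, eval_X, eval_sub, eval_one, Nat.add_sub_cancel]
  exact sum_congr rfl fun m _ => by ring

theorem hasDerivAt_Jt (k : ℕ) (ω₀ vbar v : ℝ) :
    HasDerivAt (Jt (k + 2) ω₀ vbar)
      ((k + 1) * (bernsteinSum k fun m => log ((m + 1 : ℕ) + ω₀) - log (m + ω₀)).eval (v / vbar)
        / vbar) v := by
  have hJt : Jt (k + 2) ω₀ vbar =
      fun v => (bernsteinSum (k + 1) fun m => log (m + ω₀)).eval (v / vbar) :=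
    funext (Jt_succ_eq_eval (k + 1) ω₀ vbar)
  rw [hJt]
  refine ((Polynomial.hasDerivAt _ _).comp v ((hasDerivAt_id v).div_const vbar)).congr_deriv ?_
  rw [derivative_bernsteinSum]
  simp [div_eq_mul_inv]

theorem deriv_Jt_le_log_div (k : ℕ) {ω₀ vbar v : ℝ} (hω : 1 ≤ ω₀) (hvbar : 0 ≤ vbar)
    (hx : v / vbar ∈ Set.Icc (1 / 2) 1) :
    deriv (Jt (k + 2) ω₀ vbar) v ≤ log (k + 2) / vbar := by
  have hx₀ : v / vbar ∈ Set.Icc (0 : ℝ) 1 := ⟨by linarith [hx.1], hx.2⟩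
  rw [(hasDerivAt_Jt k ω₀ vbar v).deriv]
  calc (k + 1) * (bernsteinSum k fun m => log ((m + 1 : ℕ) + ω₀) - log (m + ω₀)).eval (v / vbar)
        / vbar
      ≤ (k + 1) * (bernsteinSum k logIncrement).eval (v / vbar) / vbar := by
        gcongr
        exact bernsteinSum_eval_le_eval k (fun m => log_add_sub_log_le_logIncrement m hω) hx₀
    _ ≤ (k + 1) * (bernsteinSum k logIncrement).eval (1 / 2) / vbar := by
        gcongr
        exact antitoneOn_bernsteinSum_eval k antitone_logIncrement (by norm_num) hx₀ hx.1
    _ ≤ log (k + 2) / vbar := by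
        gcongr
        exact succ_mul_bernsteinSum_logIncrement_eval_half_le_log k

/-- If `v̄ > (2/δ)·ln(n−1+ω₀)` then `J̃'(v) < δ/2` for every `v ∈ [v̄/2, v̄]`. -/
theorem stmt8 (n : ℕ) (hn : 2 ≤ n) (ω₀ δ vbar : ℝ) (hω : 1 < ω₀)
    (hδ : δ ∈ Set.Ioo (0 : ℝ) 1)
    (hv : 2 / δ * Real.log ((n : ℝ) - 1 + ω₀) < vbar) :
    ∀ v ∈ Set.Icc (vbar / 2) vbar, deriv (Jt n ω₀ vbar) v < δ / 2 := by
  obtain ⟨k, rfl⟩ : ∃ k, n = k + 2 := ⟨n - 2, by omega⟩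
  obtain ⟨hδ₀, -⟩ := hδ
  rintro v ⟨hv₁, hv₂⟩
  set L := log (((k + 2 : ℕ) : ℝ) - 1 + ω₀)
  have hlog : log ((k : ℝ) + 2) < L := by
    simp only [L]
    push_cast
    exact log_lt_log (by positivity) (by linarith)
  have hL : 0 < L := (log_pos (by linarith [k.cast_nonneg (α := ℝ)])).trans hlog
  have hvbar : 0 < vbar := lt_of_le_of_lt (by positivity) hv
  have hx : v / vbar ∈ Set.Icc (1 / 2) 1 := by
    rw [Set.mem_Icc, le_div_iff₀ hvbar, div_le_one hvbar]
    constructor <;> linarith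
  calc deriv (Jt (k + 2) ω₀ vbar) v
      ≤ log (k + 2) / vbar := deriv_Jt_le_log_div k hω.le hvbar.le hx
    _ < L / vbar := by gcongr
    _ < δ / 2 := by
        rw [div_lt_iff₀ hvbar]
        calc L = δ / 2 * (2 / δ * L) := by field_simp
          _ < δ / 2 * vbar := by gcongr
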